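/- Let n ≥ 2 be an integer and let 1 ≤ p₁,…,pₙ, r ≤ ∞. If the multilinear spherical average T is of strong type at (p₁,…,pₙ;r), then 1/r ≤ Σ_{j=1}^n 1/p_j. -/

import Mathlib

open MeasureTheory ENNReal

/-- The `L^p` "norm" (with respect to Lebesgue measure on `ℝ`) of an
`ℝ≥0∞`-valued function, with the convention for `p = ∞`. -/
noncomputable def lpNorm (p : ℝ≥0∞) (g : ℝ → ℝ≥0∞) : ℝ≥0∞ :=
  if p = ∞ then essSup g (volume : Measure ℝ)
  else (∫⁻ x, g x ^ p.toReal) ^ (1 / p.toReal)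

/-- The normalized (total mass 1) surface measure on the unit sphere
`S^{n-1} ⊂ ℝ^n`, viewed as a measure on `ℝ^n` supported on the sphere. -/
noncomputable def normSphere (n : ℕ) : Measure (EuclideanSpace ℝ (Fin n)) :=
  (Measure.map Subtype.val
      ((volume : Measure (EuclideanSpace ℝ (Fin n))).toSphere) Set.univ)⁻¹ •
    Measure.map Subtype.val ((volume : Measure (EuclideanSpace ℝ (Fin n))).toSphere)

/-- The multilinear spherical average
`T(f₁,…,fₙ)(x) = ∫_{S^{n-1}} ∏_{j=1}^n f_j(x - σ_j) dσ(σ)`. -/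
noncomputable def sphAvg (n : ℕ) (f : Fin n → ℝ → ℝ) (x : ℝ) : ℝ≥0∞ :=
  ∫⁻ σ, ∏ j, ENNReal.ofReal (f j (x - σ j)) ∂(normSphere n)

/-!
Test the bound on `f_j = χ_[-(R+1), R+1]` for all `j`. Every coordinate of a unit vector lies in
`[-1, 1]`, so `T f ≥ χ_[-R, R]`, and the bound becomes `(2R)^{1/r} ≤ C (2R+2)^{Σ 1/p_j}`.
Letting `R → ∞` forces `1/r ≤ Σ 1/p_j`.
-/

open Metric Set Filter

lemma ofReal_indicator_one {α : Type*} (s : Set α) :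
    (fun x => ENNReal.ofReal (s.indicator 1 x)) = s.indicator 1 := by
  funext x
  by_cases hx : x ∈ s <;> simp [hx]

lemma lpNorm_eq_eLpNorm {p : ℝ≥0∞} (hp : p ≠ 0) (g : ℝ → ℝ≥0∞) :
    lpNorm p g = eLpNorm g p := by
  by_cases hp_top : p = ∞
  · simp [_root_.lpNorm, hp_top, eLpNormEssSup]
  · simp [_root_.lpNorm, hp_top, eLpNorm_eq_lintegral_rpow_enorm_toReal hp hp_top]

lemma lpNorm_mono {p : ℝ≥0∞} {g₁ g₂ : ℝ → ℝ≥0∞} (h : ∀ x, g₁ x ≤ g₂ x) :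
    lpNorm p g₁ ≤ lpNorm p g₂ := by
  unfold _root_.lpNorm
  split
  · exact essSup_mono_ae (Eventually.of_forall h)
  · gcongr
    exact h _

lemma lpNorm_indicator_Icc {p : ℝ≥0∞} (hp : p ≠ 0) {R : ℝ} (hR : 0 < R) :
    lpNorm p ((Icc (-R) R).indicator 1) = ENNReal.ofReal ((2 * R) ^ p.toReal⁻¹) := by
  have hvol : volume (Icc (-R) R) = ENNReal.ofReal (2 * R) := by
    rw [Real.volume_Icc]; ring_nf
  rw [lpNorm_eq_eLpNorm hp, Pi.one_def,
    eLpNorm_indicator_const' measurableSet_Icc (by simp [hvol, hR]) hp, hvol,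
    ENNReal.ofReal_rpow_of_pos (by positivity)]
  simp

instance isProbabilityMeasure_normSphere (n : ℕ) [NeZero n] :
    IsProbabilityMeasure (normSphere n) := by
  have : NeZero (Measure.map Subtype.val
      ((volume : Measure (EuclideanSpace ℝ (Fin n))).toSphere)) :=
    ⟨(Measure.map_ne_zero_iff measurable_subtype_coe.aemeasurable).2
      (Measure.toSphere_ne_zero _)⟩
  exact isProbabilityMeasureSMul

lemma ae_normSphere_mem_sphere (n : ℕ) :
    ∀ᵐ σ ∂normSphere n, σ ∈ sphere (0 : EuclideanSpace ℝ (Fin n)) 1 :=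
  Measure.ae_smul_measure ((ae_map_iff measurable_subtype_coe.aemeasurable
    isClosed_sphere.measurableSet).2 (Eventually.of_forall fun σ => σ.2)) _

lemma indicator_Icc_le_sphAvg (n : ℕ) [NeZero n] (R x : ℝ) :
    (Icc (-R) R).indicator 1 x ≤ sphAvg n (fun _ => (Icc (-(R + 1)) (R + 1)).indicator 1) x := by
  by_cases hx : x ∈ Icc (-R) R
  · calc (Icc (-R) R).indicator 1 x = ∫⁻ _, 1 ∂normSphere n := by simp [hx]
      _ ≤ _ := lintegral_mono_ae <| (ae_normSphere_mem_sphere n).mono fun σ hσ => ?_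
    have hσj (j : Fin n) : |σ j| ≤ 1 := by
      simpa [← Real.norm_eq_abs, mem_sphere_zero_iff_norm.1 hσ] using PiLp.norm_apply_le σ j
    have hmem (j : Fin n) : x - σ j ∈ Icc (-(R + 1)) (R + 1) := by
      obtain ⟨hσ_ge, hσ_le⟩ := abs_le.1 (hσj j)
      constructor <;> linarith [hx.1, hx.2]
    simp only [indicator_of_mem (hmem _), Pi.one_apply, ENNReal.ofReal_one, Finset.prod_const_one,
      le_refl]
  · simp [hx]

lemma le_of_forall_rpow_le_mul_rpow {a b C : ℝ} (h : ∀ R ≥ 1, R ^ a ≤ C * R ^ b) :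
    a ≤ b := by
  by_contra! hba
  obtain ⟨R, hR, hRC⟩ := ((eventually_ge_atTop 1).and
    ((tendsto_rpow_atTop (sub_pos.2 hba)).eventually_gt_atTop C)).exists
  have hRpos : 0 < R := by linarith
  have : R ^ (a - b) * R ^ b ≤ C * R ^ b := by
    rw [← Real.rpow_add hRpos, sub_add_cancel]
    exact h R hR
  exact (le_of_mul_le_mul_right this (Real.rpow_pos_of_pos hRpos b)).not_gt hRC

lemma ENNReal.one_div_le_sum_one_div_of_toReal_inv_le {ι : Type*} [Fintype ι] {p : ι → ℝ≥0∞}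
    {r : ℝ≥0∞} (hr : r ≠ 0) (h : r.toReal⁻¹ ≤ ∑ j, (p j).toReal⁻¹) :
    1 / r ≤ ∑ j, 1 / p j :=
  calc 1 / r = ENNReal.ofReal r.toReal⁻¹ := by
        rw [one_div, ← toReal_inv, ofReal_toReal (inv_ne_top.2 hr)]
    _ ≤ ENNReal.ofReal (∑ j, (p j).toReal⁻¹) := ofReal_le_ofReal h
    _ = ∑ j, ENNReal.ofReal (p j)⁻¹.toReal := by
        rw [ofReal_sum_of_nonneg (fun _ _ => by positivity)]
        simp only [toReal_inv]
    _ ≤ ∑ j, 1 / p j := Finset.sum_le_sum fun _ _ => by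
        rw [one_div]
        exact ofReal_toReal_le

lemma rpow_le_mul_rpow_of_lpNorm_sphAvg_le (n : ℕ) [NeZero n] {p : Fin n → ℝ≥0∞} {r : ℝ≥0∞}
    (hp : ∀ j, p j ≠ 0) (hr : r ≠ 0) {C R : ℝ} (hC : 0 ≤ C) (hR : 0 < R)
    (hbound : lpNorm r (sphAvg n fun _ => (Icc (-(R + 1)) (R + 1)).indicator 1) ≤
      ENNReal.ofReal C * ∏ j, lpNorm (p j)
        (fun x => ENNReal.ofReal ((Icc (-(R + 1)) (R + 1)).indicator 1 x))) :
    (2 * R) ^ r.toReal⁻¹ ≤ C * (2 * (R + 1)) ^ ∑ j, (p j).toReal⁻¹ := by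
  have h : ENNReal.ofReal ((2 * R) ^ r.toReal⁻¹) ≤
      ENNReal.ofReal (C * (2 * (R + 1)) ^ ∑ j, (p j).toReal⁻¹) :=
    calc ENNReal.ofReal ((2 * R) ^ r.toReal⁻¹) = lpNorm r ((Icc (-R) R).indicator 1) :=
          (lpNorm_indicator_Icc hr hR).symm
      _ ≤ _ := lpNorm_mono (indicator_Icc_le_sphAvg n R)
      _ ≤ _ := hbound
      _ = _ := by
        simp only [ofReal_indicator_one, lpNorm_indicator_Icc (hp _) (by linarith : 0 < R + 1)]
        rw [← ENNReal.ofReal_prod_of_nonneg (fun _ _ => by positivity),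
          ← ENNReal.ofReal_mul hC, Real.rpow_sum_of_pos (by linarith)]
  exact (ENNReal.ofReal_le_ofReal_iff (by positivity)).1 h

theorem necessary_condition_i (n : ℕ) (hn : 2 ≤ n) (p : Fin n → ℝ≥0∞) (r : ℝ≥0∞)
    (hp : ∀ j, 1 ≤ p j) (hr : 1 ≤ r)
    (hT : ∃ C : ℝ, 0 < C ∧ ∀ f : Fin n → ℝ → ℝ,
      (∀ j, Measurable (f j)) → (∀ j x, 0 ≤ f j x) →
      lpNorm r (sphAvg n f) ≤ ENNReal.ofReal C *
        ∏ j, lpNorm (p j) (fun x => ENNReal.ofReal (f j x))) :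
    1 / r ≤ ∑ j, 1 / p j := by
  have : NeZero n := ⟨by omega⟩
  have hr0 : r ≠ 0 := (zero_lt_one.trans_le hr).ne'
  have hp0 (j : Fin n) : p j ≠ 0 := (zero_lt_one.trans_le (hp j)).ne'
  obtain ⟨C, hC, hbound⟩ := hT
  set a := r.toReal⁻¹
  set b := ∑ j, (p j).toReal⁻¹
  have growth (R : ℝ) (hR : 1 ≤ R) : R ^ a ≤ C * 4 ^ b * R ^ b :=
    calc R ^ a ≤ (2 * R) ^ a := by gcongr; linarith
      _ ≤ C * (2 * (R + 1)) ^ b :=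
        rpow_le_mul_rpow_of_lpNorm_sphAvg_le n hp0 hr0 hC.le (by linarith) <|
          hbound _ (fun _ => measurable_one.indicator measurableSet_Icc)
            (fun _ => indicator_nonneg fun _ _ => zero_le_one)
      _ ≤ C * (4 * R) ^ b := by gcongr C * ?_ ^ b; linarith
      _ = C * 4 ^ b * R ^ b := by rw [Real.mul_rpow (by norm_num) (by linarith)]; ring
  exact ENNReal.one_div_le_sum_one_div_of_toReal_inv_le hr0
    (le_of_forall_rpow_le_mul_rpow growth)
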